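/- For all integers n ≥ 0, bt(2n) ≡ bt(n) (mod 4). -/

import Mathlib

open PowerSeries

/-- Truncated version of `fₖ = ∏_{i≥1} (1 - q^{k i})`: the product over `1 ≤ i ≤ N`,
which has the same coefficients as the infinite product in degrees `≤ N`. -/
noncomputable def fTrunc (k N : ℕ) : PowerSeries ℤ :=
  ∏ i ∈ Finset.Icc 1 N, (1 - (PowerSeries.X : PowerSeries ℤ) ^ (k * i))

/-- `bt n` is the `n`-th coefficient of `f₄³ / (f₁⁶ f₂³)`, the number of
overcubic partition triples of `n`. -/
noncomputable def bt (n : ℕ) : ℤ :=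
  PowerSeries.coeff (R := ℤ) n
    ((fTrunc 4 n) ^ 3 * PowerSeries.invOfUnit ((fTrunc 1 n) ^ 6 * (fTrunc 2 n) ^ 3) 1)

/-!
Modulo 4 one has `(1 - x)² = (1 - x²)(1 + 2t)` whenever `(1 - x) t = x`. With `x = q^j` and
`t = q^j / (1 - q^j)` this gives `f₁² ≡ f₂ U₁` and `f₂² ≡ f₄ U₂`, where
`U_k = ∏_i (1 + 2 q^{ki}/(1 - q^{ki})) ≡ 1 + 2 ∑_i q^{ki}/(1 - q^{ki})` and `U_k² ≡ 1`.
Hence `f₄³ / (f₁⁶ f₂³) ≡ U₁ U₂`, whose `n`-th coefficient for `n > 0` is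
`2 (d(n) + #{even divisors of n}) ≡ 2 #{odd divisors of n}`, and `n`, `2n` have the same odd divisors.
-/

open Finset

section FourEqZero

variable {R : Type*} [CommRing R]

theorem one_add_two_mul_mul_one_add_two_mul (h4 : (4 : R) = 0) (a b : R) :
    (1 + 2 * a) * (1 + 2 * b) = 1 + 2 * (a + b) := by
  linear_combination a * b * h4

theorem one_add_two_mul_sq (h4 : (4 : R) = 0) (a : R) : (1 + 2 * a) ^ 2 = 1 := by
  linear_combination (a + a ^ 2) * h4

theorem prod_one_add_two_mul {ι : Type*} (h4 : (4 : R) = 0) (s : Finset ι) (t : ι → R) :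
    ∏ i ∈ s, (1 + 2 * t i) = 1 + 2 * ∑ i ∈ s, t i := by
  classical
  induction s using Finset.induction_on with
  | empty => simp
  | insert a s ha ih =>
    rw [prod_insert ha, sum_insert ha, ih, one_add_two_mul_mul_one_add_two_mul h4]

theorem one_sub_sq_eq_of_one_sub_mul_eq (h4 : (4 : R) = 0) {x t : R} (h : (1 - x) * t = x) :
    (1 - x) ^ 2 = (1 - x ^ 2) * (1 + 2 * t) := by
  linear_combination (-2 - 2 * x) * h - x * h4

theorem mul_eq_of_sq_eq_mul {a₁ a₂ a₄ u₁ u₂ b : R} (h₁ : a₁ ^ 2 = a₂ * u₁)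
    (h₂ : a₂ ^ 2 = a₄ * u₂) (hu₁ : u₁ ^ 2 = 1) (hu₂ : u₂ ^ 2 = 1)
    (hb : a₁ ^ 6 * a₂ ^ 3 * b = 1) : a₄ ^ 3 * b = u₁ * u₂ := calc
  a₄ ^ 3 * b = a₄ ^ 3 * b * (u₁ ^ 2) ^ 2 * (u₂ ^ 2) ^ 2 := by rw [hu₁, hu₂]; ring
  _ = (a₄ * u₂) ^ 3 * u₁ ^ 3 * b * (u₁ * u₂) := by ring
  _ = a₂ ^ 3 * (a₂ * u₁) ^ 3 * b * (u₁ * u₂) := by rw [← h₂]; ring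
  _ = a₁ ^ 6 * a₂ ^ 3 * b * (u₁ * u₂) := by rw [← h₁]; ring
  _ = u₁ * u₂ := by rw [hb, one_mul]

end FourEqZero

theorem filter_Icc_mem_divisors {n N : ℕ} (h : n ≤ N) :
    {i ∈ Icc 1 N | i ∈ n.divisors} = n.divisors := by
  rw [filter_mem_eq_inter, inter_eq_right]
  intro d hd
  exact mem_Icc.mpr ⟨Nat.pos_of_mem_divisors hd, (Nat.divisor_le hd).trans h⟩

theorem card_filter_Icc_two_mul_mem_divisors {n N : ℕ} (h : n ≤ 2 * N) :
    #{i ∈ Icc 1 N | 2 * i ∈ n.divisors} = #{d ∈ n.divisors | Even d} := by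
  refine card_nbij' (2 * ·) (· / 2) ?_ ?_ ?_ ?_
  · intro i hi
    simp only [mem_coe, mem_filter] at hi ⊢
    exact ⟨hi.2, even_two_mul i⟩
  · intro d hd
    simp only [mem_coe, mem_filter] at hd ⊢
    obtain ⟨hd, hev⟩ := hd
    have h2 := even_iff_two_dvd.mp hev
    rw [Nat.mul_div_cancel' h2]
    have := Nat.divisor_le hd
    have := Nat.pos_of_mem_divisors hd
    exact ⟨mem_Icc.mpr ⟨by omega, by omega⟩, hd⟩
  · intro i _
    simp
  · intro d hd
    simp only [mem_coe, mem_filter] at hd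
    exact Nat.mul_div_cancel' (even_iff_two_dvd.mp hd.2)

theorem filter_odd_divisors_two_mul (n : ℕ) :
    {d ∈ (2 * n).divisors | Odd d} = {d ∈ n.divisors | Odd d} := by
  ext d
  simp only [mem_filter, Nat.mem_divisors, and_congr_left_iff]
  intro hd
  rw [Nat.Coprime.dvd_mul_left (Nat.coprime_two_right.mpr hd)]
  simp

noncomputable def multiplesSeries (R : Type*) [Semiring R] (j : ℕ) : R⟦X⟧ :=
  mk fun m => if j ∈ m.divisors then 1 else 0

theorem one_sub_X_pow_mul_multiplesSeries {R : Type*} [Ring R] {j : ℕ} (hj : 0 < j) :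
    (1 - X ^ j) * multiplesSeries R j = X ^ j := by
  ext m
  rw [sub_mul, one_mul, map_sub, coeff_X_pow_mul', coeff_X_pow, multiplesSeries, coeff_mk]
  by_cases hjm : j ≤ m
  · obtain ⟨r, rfl⟩ := Nat.exists_eq_add_of_le hjm
    rw [if_pos hjm, coeff_mk, Nat.add_sub_cancel_left]
    simp only [Nat.mem_divisors, Nat.dvd_add_self_left]
    rcases Nat.eq_zero_or_pos r with rfl | hr
    · simp [hj.ne']
    · simp [hr.ne']
  · rw [if_neg hjm, if_neg fun hd => hjm (Nat.divisor_le hd), if_neg (show m ≠ j by omega),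
      sub_zero]

section Reduction

variable {R : Type*} [CommRing R]

theorem map_fTrunc (f : ℤ →+* R) (k N : ℕ) :
    map f (fTrunc k N) = ∏ i ∈ Icc 1 N, (1 - X ^ (k * i)) := by
  simp [fTrunc, map_prod]

theorem constantCoeff_fTrunc {k : ℕ} (hk : 0 < k) (N : ℕ) : constantCoeff (fTrunc k N) = 1 := by
  refine (map_prod constantCoeff _ _).trans (prod_eq_one fun i hi => ?_)
  have : k * i ≠ 0 := (Nat.mul_pos hk (mem_Icc.mp hi).1).ne'
  simp [this]

theorem map_fTrunc_sq (h4 : (4 : R⟦X⟧) = 0) (f : ℤ →+* R) {k : ℕ} (hk : 0 < k) (N : ℕ) :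
    map f (fTrunc k N) ^ 2 =
      map f (fTrunc (2 * k) N) * ∏ i ∈ Icc 1 N, (1 + 2 * multiplesSeries R (k * i)) := by
  rw [map_fTrunc, map_fTrunc, ← prod_pow, ← prod_mul_distrib]
  refine prod_congr rfl fun i hi => ?_
  rw [mul_assoc, pow_mul' _ 2]
  exact one_sub_sq_eq_of_one_sub_mul_eq h4
    (one_sub_X_pow_mul_multiplesSeries (Nat.mul_pos hk (mem_Icc.mp hi).1))

end Reduction

theorem four_eq_zero_powerSeries : (4 : (ZMod 4)⟦X⟧) = 0 := by
  rw [← map_ofNat C 4, show (OfNat.ofNat 4 : ZMod 4) = 0 from rfl, map_zero]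

theorem bt_cast_eq_coeff (n : ℕ) :
    (bt n : ZMod 4) = coeff n ((∏ i ∈ Icc 1 n, (1 + 2 * multiplesSeries (ZMod 4) i)) *
      ∏ i ∈ Icc 1 n, (1 + 2 * multiplesSeries (ZMod 4) (2 * i))) := by
  set f := Int.castRingHom (ZMod 4)
  have h4 := four_eq_zero_powerSeries
  have hunit (t : ℕ → (ZMod 4)⟦X⟧) : (∏ i ∈ Icc 1 n, (1 + 2 * t i)) ^ 2 = 1 := by
    rw [prod_one_add_two_mul h4, one_add_two_mul_sq h4]
  have h₁ := map_fTrunc_sq h4 f one_pos n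
  have h₂ := map_fTrunc_sq h4 f two_pos n
  simp only [one_mul, Nat.reduceMul] at h₁ h₂
  rw [bt, ← eq_intCast f, ← coeff_map, map_mul, map_pow,
    mul_eq_of_sq_eq_mul h₁ h₂ (hunit _) (hunit _) ?_]
  have hinv := mul_invOfUnit (fTrunc 1 n ^ 6 * fTrunc 2 n ^ 3) 1 (by
    simp [constantCoeff_fTrunc one_pos, constantCoeff_fTrunc two_pos])
  simpa using congrArg (map f) hinv

theorem bt_cast_eq_odd_divisors (n : ℕ) :
    (bt n : ZMod 4) = (if n = 0 then 1 else 0) + 2 * #{d ∈ n.divisors | Odd d} := by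
  have h4 := four_eq_zero_powerSeries
  rw [bt_cast_eq_coeff, prod_one_add_two_mul h4, prod_one_add_two_mul h4,
    one_add_two_mul_mul_one_add_two_mul h4, ← map_ofNat C 2, map_add, coeff_one, coeff_C_mul,
    map_add, map_sum, map_sum]
  simp only [multiplesSeries, coeff_mk, sum_boole, filter_Icc_mem_divisors le_rfl,
    card_filter_Icc_two_mul_mem_divisors (Nat.le_mul_of_pos_left n two_pos)]
  rw [← card_filter_add_card_filter_not Even]
  simp only [Nat.not_even_iff_odd]
  have h4' : (4 : ZMod 4) = 0 := rfl
  push_cast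
  linear_combination (#{d ∈ n.divisors | Even d} : ZMod 4) * h4'

theorem stmt11 (n : ℕ) : bt (2 * n) ≡ bt n [ZMOD 4] := by
  refine (ZMod.intCast_eq_intCast_iff _ _ 4).mp ?_
  rw [bt_cast_eq_odd_divisors, bt_cast_eq_odd_divisors, filter_odd_divisors_two_mul]
  simp
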